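/- arXiv:2602.10969 — 8 statements merged into one kernel-verified Lean document; each statement's English description precedes it below -/
import Mathlib

section
/- Fix x ∈ 𝒳 with q(x) > 0 and suppose f_k(1; x, (1,…,1)) > 0 for every k ∈ {1,…,K}. Then P(X = x, R_{k+1} = 1, …, R_K = 1) > 0 for every k, so each conditional probability P(R_k = 1 | X = x, R_{k+1} = 1, …, R_K = 1) is well defined, and the target law satisfies q(x) = P(X = x, R_1 = 1, …, R_K = 1) / ∏_{k=1}^K P(R_k = 1 | X = x, R_{k+1} = 1, …, R_K = 1). -/
/-!
Marginalising the unconstrained indicators from the lowest index upwards, each step sums the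
only factor that still involves the current indicator, `f_k(0; x, s) + f_k(1; x, s) = 1`.
Hence for every upper set `U` of indices,
`P(X = x, R_i = 1 for i ∈ U) = q(x) ∏_{k ∈ U} f_k(1; x, 1, …, 1)`, which is positive, and the
propensity score `P(R_k = 1 | X = x, R_{k+1} = … = R_K = 1)` is the ratio of two such products,
namely `f_k(1; x, 1, …, 1)`. Dividing `p(x, 1)` by the product of these scores leaves `q(x)`.
-/

open Finset Function

theorem sum_filter_forall_notMem_insert {ι β M : Type*} [DecidableEq ι] [Fintype ι]
    [DecidableEq β] [Fintype β] [AddCommMonoid M] (c : β) {a : ι} {s : Finset ι} (ha : a ∉ s)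
    (F : (ι → β) → M) :
    ∑ r ∈ univ.filter (fun r : ι → β => ∀ i ∉ insert a s, r i = c), F r
      = ∑ r ∈ univ.filter (fun r : ι → β => ∀ i ∉ s, r i = c), ∑ b, F (update r a b) := by
  rw [← sum_product' (f := fun r b => F (update r a b))]
  refine sum_nbij' (fun r => (update r a c, r a)) (fun p => update p.1 a p.2) ?_ ?_ ?_ ?_ ?_
  all_goals simp only [mem_filter, mem_product, mem_univ, true_and, and_true, mem_insert, not_or]
  · intro r hr i hi
    by_cases hia : i = a
    · subst hia; exact update_self ..
    · rw [update_of_ne hia]; exact hr i ⟨hia, hi⟩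
  · rintro ⟨r, b⟩ hr i ⟨hia, hi⟩
    rw [update_of_ne hia]; exact hr i hi
  · intro r _
    simp
  · rintro ⟨r, b⟩ hr
    simp [← hr a ha]
  · intro r _
    simp

section ChainFactorization

variable {ι R : Type*} [LinearOrder ι] [DecidableEq ι] [Fintype ι] [CommSemiring R]
  {g : ι → Bool → (ι → Bool) → R}

theorem sum_filter_prod_eq_one (hsum : ∀ k r, g k false r + g k true r = 1)
    (hdep : ∀ k b, DependsOn (g k b) (Set.Ioi k)) (s : Finset ι) :
    ∑ r ∈ univ.filter (fun r : ι → Bool => ∀ i ∉ s, r i = true), ∏ k ∈ s, g k (r k) r = 1 := by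
  induction s using Finset.induction_on_min with
  | empty =>
    have hall : univ.filter (fun r : ι → Bool => ∀ i ∉ (∅ : Finset ι), r i = true)
        = {fun _ => true} := by
      ext r; simp [funext_iff]
    rw [hall, sum_singleton, prod_empty]
  | insert a s ha ih =>
    have has : a ∉ s := fun h => lt_irrefl a (ha a h)
    rw [sum_filter_forall_notMem_insert true has]
    refine (sum_congr rfl fun r _ => ?_).trans ih
    have hfactor : ∀ b, ∏ k ∈ insert a s, g k (update r a b k) (update r a b)
        = g a b r * ∏ k ∈ s, g k (r k) r := by
      intro b
      rw [prod_insert has, update_self]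
      congr 1
      · exact hdep a b fun i hi => update_of_ne (ne_of_gt hi) ..
      · refine prod_congr rfl fun k hk => ?_
        rw [update_of_ne (ha k hk).ne']
        exact hdep k _ fun i hi => update_of_ne ((ha k hk).trans hi).ne' ..
    rw [Fintype.sum_bool, hfactor, hfactor, ← add_mul, add_comm, hsum, one_mul]

theorem sum_filter_prod_of_isUpperSet (hsum : ∀ k r, g k false r + g k true r = 1)
    (hdep : ∀ k b, DependsOn (g k b) (Set.Ioi k)) (P : ι → Prop) [DecidablePred P]
    (hP : IsUpperSet {i | P i}) :
    ∑ r ∈ univ.filter (fun r : ι → Bool => ∀ i, P i → r i = true), ∏ k, g k (r k) r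
      = ∏ k ∈ univ.filter P, g k true (fun _ => true) := by
  have hsplit : ∀ r ∈ univ.filter (fun r : ι → Bool => ∀ i, P i → r i = true),
      ∏ k, g k (r k) r
        = (∏ k ∈ univ.filter P, g k true (fun _ => true))
          * ∏ k ∈ univ.filter (fun k => ¬ P k), g k (r k) r := by
    intro r hr
    simp only [mem_filter, mem_univ, true_and] at hr
    rw [← prod_filter_mul_prod_filter_not univ P]
    congr 1
    refine prod_congr rfl fun k hk => ?_
    simp only [mem_filter, mem_univ, true_and] at hk
    rw [hr k hk]
    exact hdep k true fun i hi => hr i (hP (le_of_lt hi) hk)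
  have hfree : univ.filter (fun r : ι → Bool => ∀ i, P i → r i = true)
      = univ.filter (fun r : ι → Bool => ∀ i ∉ univ.filter (fun k => ¬ P k), r i = true) := by
    ext r; simp
  rw [sum_congr rfl hsplit, ← mul_sum, hfree, sum_filter_prod_eq_one hsum hdep, mul_one]

end ChainFactorization

theorem stmt_0_general
    (K : ℕ)
    (X : Fin K → Type)
    (q : (∀ k, X k) → ℝ)
    (f : Fin K → Bool → (∀ k, X k) → (Fin K → Bool) → ℝ)
    (hfsum : ∀ k x r, f k false x r + f k true x r = 1)
    (hfdep : ∀ k b x (r r' : Fin K → Bool),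
      (∀ i : Fin K, k < i → r i = r' i) → f k b x r = f k b x r')
    (p : (∀ k, X k) → (Fin K → Bool) → ℝ)
    (hp : ∀ x r, p x r = q x * ∏ k, f k (r k) x r)
    (x : ∀ k, X k) (hx : 0 < q x)
    (hfx : ∀ k : Fin K, 0 < f k true x (fun _ => true)) :
    (∀ k : Fin K,
      0 < ∑ r ∈ univ.filter (fun r : Fin K → Bool => ∀ i : Fin K, k < i → r i = true), p x r)
    ∧ q x = p x (fun _ => true) /
        ∏ k : Fin K,
          ((∑ r ∈ univ.filter (fun r : Fin K → Bool => ∀ i : Fin K, k ≤ i → r i = true), p x r)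
            / (∑ r ∈ univ.filter (fun r : Fin K → Bool => ∀ i : Fin K, k < i → r i = true),
                p x r)) := by
  set F : Fin K → ℝ := fun k => f k true x (fun _ => true)
  have hmarginal : ∀ (P : Fin K → Prop) [DecidablePred P], IsUpperSet {i | P i} →
      ∑ r ∈ univ.filter (fun r : Fin K → Bool => ∀ i, P i → r i = true), p x r
        = q x * ∏ k ∈ univ.filter P, F k := by
    intro P _ hP
    simp_rw [hp, ← mul_sum]
    congr 1
    -- `convert` bridges the `Fin`-specific instance deciding `∀ i : Fin K, _` in the statement
    convert sum_filter_prod_of_isUpperSet (g := fun k b r => f k b x r) (hfsum · x)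
      (fun k b _ _ h => hfdep k b x _ _ h) P hP
  have hlt : ∀ k : Fin K,
      ∑ r ∈ univ.filter (fun r : Fin K → Bool => ∀ i, k < i → r i = true), p x r
        = q x * ∏ i ∈ Ioi k, F i := fun k => by
    rw [hmarginal (k < ·) (isUpperSet_Ioi k), filter_lt_eq_Ioi]
  have hle : ∀ k : Fin K,
      ∑ r ∈ univ.filter (fun r : Fin K → Bool => ∀ i, k ≤ i → r i = true), p x r
        = F k * (q x * ∏ i ∈ Ioi k, F i) := fun k => by
    rw [hmarginal (k ≤ ·) (isUpperSet_Ici k), filter_le_eq_Ici, ← Ioi_insert,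
      prod_insert notMem_Ioi_self, mul_left_comm]
  have hpos : ∀ k : Fin K, 0 < q x * ∏ i ∈ Ioi k, F i :=
    fun k => mul_pos hx (prod_pos fun i _ => hfx i)
  refine ⟨fun k => hlt k ▸ hpos k, ?_⟩
  simp_rw [hle, hlt, mul_div_cancel_right₀ _ (hpos _).ne', hp]
  exact (mul_div_cancel_right₀ _ (prod_pos fun k _ => hfx k).ne').symm

/-- Chain-factorized discrete missing data model: identification of the target law
via the product of propensity scores (Bayes / IPW identity), together with
positivity of all conditioning events. -/
theorem stmt_0
    (K : ℕ) (hK : 0 < K)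
    (X : Fin K → Type) [∀ k, Fintype (X k)] [∀ k, Nonempty (X k)]
    (q : (∀ k, X k) → ℝ)
    (hq0 : ∀ x, 0 ≤ q x) (hq1 : ∑ x, q x = 1)
    (f : Fin K → Bool → (∀ k, X k) → (Fin K → Bool) → ℝ)
    (hf0 : ∀ k b x r, 0 ≤ f k b x r)
    (hfsum : ∀ k x r, f k false x r + f k true x r = 1)
    (hfdep : ∀ k b x (r r' : Fin K → Bool),
      (∀ i : Fin K, k < i → r i = r' i) → f k b x r = f k b x r')
    (p : (∀ k, X k) → (Fin K → Bool) → ℝ)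
    (hp : ∀ x r, p x r = q x * ∏ k, f k (r k) x r)
    (x : ∀ k, X k) (hx : 0 < q x)
    (hfx : ∀ k : Fin K, 0 < f k true x (fun _ => true)) :
    (∀ k : Fin K,
      0 < ∑ r ∈ univ.filter (fun r : Fin K → Bool => ∀ i : Fin K, k < i → r i = true), p x r)
    ∧ q x = p x (fun _ => true) /
        ∏ k : Fin K,
          ((∑ r ∈ univ.filter (fun r : Fin K → Bool => ∀ i : Fin K, k ≤ i → r i = true), p x r)
            / (∑ r ∈ univ.filter (fun r : Fin K → Bool => ∀ i : Fin K, k < i → r i = true),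
                p x r)) :=
  stmt_0_general K X q f hfsum hfdep p hp x hx hfx
end

section
/- For every x_2 ∈ 𝒳_2 with P(X_2 = x_2, R_2 = 1) > 0, one has P(R_1 = 1 | X_2 = x_2, R_2 = 1) = f_1(1; x_2), and whenever P(X_2 = x_2) > 0 also P(R_1 = 1 | X_2 = x_2) = f_1(1; x_2). Hence the propensity score of R_1 is identified from the distribution of (X_2, R_1) on the event R_2 = 1 (on which X_2 is observed): conditioning on R_2 = 1 does not change it. -/
/-!
Given `X₂ = x₂`, the law factors as `f₁(r₁; x₂)` times a term free of `r₁`, so `R₁` is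
independent of `(X₁, R₂)`: the factor `f₁(1; x₂)` splits off every sum over `x₁` and `r₂`,
and the remaining sum is the normalizing constant of either conditional.
-/

open Finset

theorem sum_eq_mul_sum_sum_of_eq_mul {R α β : Type*} [CommSemiring R] [Fintype α] [Fintype β]
    {p : α → β → R} (h : α → R) {g : β → R} (hp : ∀ a r, p a r = h a * g r)
    (hg : ∑ r, g r = 1) (r₀ : β) :
    ∑ a, p a r₀ = g r₀ * ∑ a, ∑ r, p a r := by
  simp only [hp, ← mul_sum, hg, mul_one]
  rw [← sum_mul, mul_comm]

theorem stmt_2_general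
    (X1 X2 : Type) [Fintype X1] [Fintype X2]
    (q : X1 → X2 → ℝ)
    (f1 : Bool → X2 → ℝ) (f2 : Bool → X1 → ℝ)
    (hf1sum : ∀ x, f1 false x + f1 true x = 1)
    (hf2sum : ∀ x, f2 false x + f2 true x = 1)
    (p : X1 → X2 → Bool → Bool → ℝ)
    (hp : ∀ x1 x2 r1 r2, p x1 x2 r1 r2 = q x1 x2 * f1 r1 x2 * f2 r2 x1)
    (x2 : X2) :
    -- P(R₁ = 1 | X₂ = x₂, R₂ = 1) = f₁(1; x₂)
    ((0 < ∑ x1, ∑ r1, p x1 x2 r1 true) →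
      (∑ x1, p x1 x2 true true) / (∑ x1, ∑ r1, p x1 x2 r1 true) = f1 true x2)
    ∧
    -- P(R₁ = 1 | X₂ = x₂) = f₁(1; x₂)
    ((0 < ∑ x1, ∑ r1, ∑ r2, p x1 x2 r1 r2) →
      (∑ x1, ∑ r2, p x1 x2 true r2) / (∑ x1, ∑ r1, ∑ r2, p x1 x2 r1 r2) = f1 true x2) := by
  have hf1 : ∑ r, f1 r x2 = 1 := by rw [Fintype.sum_bool, add_comm, hf1sum]
  have hf2 (x1 : X1) : ∑ r, f2 r x1 = 1 := by rw [Fintype.sum_bool, add_comm, hf2sum]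
  have marginal_r2 (x1 : X1) (r1 : Bool) : ∑ r2, p x1 x2 r1 r2 = q x1 x2 * f1 r1 x2 := by
    simp only [hp, ← mul_sum, hf2, mul_one]
  refine ⟨fun hpos => div_eq_of_eq_mul hpos.ne' ?_, fun hpos => div_eq_of_eq_mul hpos.ne' ?_⟩
  · exact sum_eq_mul_sum_sum_of_eq_mul (p := fun x1 r1 => p x1 x2 r1 true)
      (fun x1 => q x1 x2 * f2 true x1) (fun x1 r1 => by rw [hp]; ring) hf1 true
  · exact sum_eq_mul_sum_sum_of_eq_mul (fun x1 => q x1 x2) marginal_r2 hf1 true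

/-- Two-variable crossworld missing data model (associational irrelevancy):
the propensity score of `R₁` given `X₂` is unchanged by further conditioning
on `R₂ = 1`, and both conditionals equal the mechanism factor `f₁(1; x₂)`. -/
theorem stmt_2
    (X1 X2 : Type) [Fintype X1] [Fintype X2] [Nonempty X1] [Nonempty X2]
    (q : X1 → X2 → ℝ) (hq0 : ∀ x1 x2, 0 ≤ q x1 x2)
    (hq1 : (∑ x1, ∑ x2, q x1 x2) = 1)
    (f1 : Bool → X2 → ℝ) (f2 : Bool → X1 → ℝ)
    (hf10 : ∀ b x, 0 ≤ f1 b x) (hf1sum : ∀ x, f1 false x + f1 true x = 1)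
    (hf20 : ∀ b x, 0 ≤ f2 b x) (hf2sum : ∀ x, f2 false x + f2 true x = 1)
    (p : X1 → X2 → Bool → Bool → ℝ)
    (hp : ∀ x1 x2 r1 r2, p x1 x2 r1 r2 = q x1 x2 * f1 r1 x2 * f2 r2 x1)
    (x2 : X2) :
    -- P(R₁ = 1 | X₂ = x₂, R₂ = 1) = f₁(1; x₂)
    ((0 < ∑ x1, ∑ r1, p x1 x2 r1 true) →
      (∑ x1, p x1 x2 true true) / (∑ x1, ∑ r1, p x1 x2 r1 true) = f1 true x2)
    ∧
    -- P(R₁ = 1 | X₂ = x₂) = f₁(1; x₂)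
    ((0 < ∑ x1, ∑ r1, ∑ r2, p x1 x2 r1 r2) →
      (∑ x1, ∑ r2, p x1 x2 true r2) / (∑ x1, ∑ r1, ∑ r2, p x1 x2 r1 r2) = f1 true x2) :=
  stmt_2_general X1 X2 q f1 f2 hf1sum hf2sum p hp x2
end

section
/- (a) For every r_2 ∈ {0,1} with P(R_2 = r_2) > 0, P(R_1 = 1 | R_2 = r_2) = f_1(1; r_2). (b) For every x_1 ∈ 𝒳_1 with P(X_1 = x_1) > 0, P(R_2 = 1 | X_1 = x_1) = f_2(1; x_1) and f_2(1; x_1) = [P(X_1 = x_1, R_1 = 1, R_2 = 1) / f_1(1; 1)] / [Σ_{r_2 ∈ {0,1}} P(X_1 = x_1, R_1 = 1, R_2 = r_2) / f_1(1; r_2)]. Together with (a), the propensity score of R_2 is identified from the observed data law via the post-intervention margin obtained by fixing R_1 to one. -/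
/-!
The full law factorises as `q(x₁, x₂) f₂(r₂; x₁) f₁(r₁; r₂)`, and each `f` sums to one over its
first argument. Summing out `R₁` therefore leaves `q f₂`, and summing out both indicators leaves `q`;
so the `R₁ = 1` slice is the `R₁`-margin times `f₁(1; r₂)`, which gives (a). Dividing that slice by
the positive propensity `f₁(1; r₂)` undoes the intervention on `R₁` and recovers `q(x₁, ·) f₂(r₂; x₁)`,
whose normalisation over `r₂` is `f₂(1; x₁)`, which gives (b).
-/

open Finset

section Factorization

variable {X1 X2 : Type*} {q : X1 → X2 → ℝ} {f2 : Bool → X1 → ℝ} {f1 : Bool → Bool → ℝ}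
  {p : X1 → X2 → Bool → Bool → ℝ}

theorem sum_r1_eq_of_factorization
    (hp : ∀ x1 x2 r1 r2, p x1 x2 r1 r2 = q x1 x2 * f2 r2 x1 * f1 r1 r2)
    (hf1sum : ∀ r, f1 false r + f1 true r = 1) (x1 : X1) (x2 : X2) (r2 : Bool) :
    ∑ r1, p x1 x2 r1 r2 = q x1 x2 * f2 r2 x1 := by
  rw [Fintype.sum_bool, hp, hp]
  linear_combination q x1 x2 * f2 r2 x1 * hf1sum r2

theorem sum_r1_r2_eq_of_factorization
    (hp : ∀ x1 x2 r1 r2, p x1 x2 r1 r2 = q x1 x2 * f2 r2 x1 * f1 r1 r2)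
    (hf2sum : ∀ x, f2 false x + f2 true x = 1) (hf1sum : ∀ r, f1 false r + f1 true r = 1)
    (x1 : X1) (x2 : X2) :
    ∑ r1, ∑ r2, p x1 x2 r1 r2 = q x1 x2 := by
  rw [sum_comm]
  simp only [sum_r1_eq_of_factorization hp hf1sum, Fintype.sum_bool]
  linear_combination q x1 x2 * hf2sum x1

theorem p_true_eq_sum_r1_mul
    (hp : ∀ x1 x2 r1 r2, p x1 x2 r1 r2 = q x1 x2 * f2 r2 x1 * f1 r1 r2)
    (hf1sum : ∀ r, f1 false r + f1 true r = 1) (x1 : X1) (x2 : X2) (r2 : Bool) :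
    p x1 x2 true r2 = (∑ r1, p x1 x2 r1 r2) * f1 true r2 := by
  rw [sum_r1_eq_of_factorization hp hf1sum, hp]

variable [Fintype X2]

theorem sum_p_true_div_eq_of_factorization
    (hp : ∀ x1 x2 r1 r2, p x1 x2 r1 r2 = q x1 x2 * f2 r2 x1 * f1 r1 r2)
    {r2 : Bool} (hf1 : f1 true r2 ≠ 0) (x1 : X1) :
    (∑ x2, p x1 x2 true r2) / f1 true r2 = (∑ x2, q x1 x2) * f2 r2 x1 := by
  simp only [hp, ← sum_mul]
  exact mul_div_cancel_right₀ _ hf1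

end Factorization

theorem stmt_3_general
    (X1 X2 : Type) [Fintype X1] [Fintype X2]
    (q : X1 → X2 → ℝ)
    (f2 : Bool → X1 → ℝ) (f1 : Bool → Bool → ℝ)
    (hf2sum : ∀ x, f2 false x + f2 true x = 1)
    (hf1sum : ∀ r, f1 false r + f1 true r = 1)
    (hf1pos : ∀ r2 : Bool, 0 < f1 true r2)
    (p : X1 → X2 → Bool → Bool → ℝ)
    (hp : ∀ x1 x2 r1 r2, p x1 x2 r1 r2 = q x1 x2 * f2 r2 x1 * f1 r1 r2) :
    -- (a) P(R₁ = 1 | R₂ = r₂) = f₁(1; r₂)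
    (∀ r2 : Bool,
      0 < (∑ x1, ∑ x2, ∑ r1, p x1 x2 r1 r2) →
      (∑ x1, ∑ x2, p x1 x2 true r2) / (∑ x1, ∑ x2, ∑ r1, p x1 x2 r1 r2) = f1 true r2)
    ∧
    -- (b) P(R₂ = 1 | X₁ = x₁) = f₂(1; x₁), identified by fixing R₁ to one
    (∀ x1 : X1,
      0 < (∑ x2, ∑ r1, ∑ r2, p x1 x2 r1 r2) →
      ((∑ x2, ∑ r1, p x1 x2 r1 true) / (∑ x2, ∑ r1, ∑ r2, p x1 x2 r1 r2) = f2 true x1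
        ∧ f2 true x1
            = ((∑ x2, p x1 x2 true true) / f1 true true)
              / (∑ r2 : Bool, (∑ x2, p x1 x2 true r2) / f1 true r2))) := by
  refine ⟨fun r2 hpos => ?_, fun x1 hpos => ?_⟩
  · simp only [p_true_eq_sum_r1_mul hp hf1sum _ _ r2, ← sum_mul]
    exact mul_div_cancel_left₀ _ hpos.ne'
  · simp only [sum_r1_r2_eq_of_factorization hp hf2sum hf1sum] at hpos ⊢
    have hmargin (r2 : Bool) :
        (∑ x2, p x1 x2 true r2) / f1 true r2 = (∑ x2, q x1 x2) * f2 r2 x1 :=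
      sum_p_true_div_eq_of_factorization hp (hf1pos r2).ne' x1
    have hnormalizer : ∑ r2 : Bool, (∑ x2, p x1 x2 true r2) / f1 true r2 = ∑ x2, q x1 x2 := by
      simp only [hmargin, Fintype.sum_bool]
      linear_combination (∑ x2, q x1 x2) * hf2sum x1
    constructor
    · simp only [sum_r1_eq_of_factorization hp hf1sum, ← sum_mul]
      exact mul_div_cancel_left₀ _ hpos.ne'
    · rw [hnormalizer, hmargin, mul_div_cancel_left₀ _ hpos.ne']

/-- Two-variable model with `X₁ → R₂, R₂ → R₁` (causal irrelevancy):
(a) the propensity score of `R₁` given `R₂` equals `f₁`;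
(b) the propensity score of `R₂` given `X₁` equals `f₂`, and `f₂` is identified
from the observed data law via the post-intervention margin fixing `R₁ = 1`. -/
theorem stmt_3
    (X1 X2 : Type) [Fintype X1] [Fintype X2] [Nonempty X1] [Nonempty X2]
    (q : X1 → X2 → ℝ) (hq0 : ∀ x1 x2, 0 ≤ q x1 x2)
    (hq1 : (∑ x1, ∑ x2, q x1 x2) = 1)
    (f2 : Bool → X1 → ℝ) (f1 : Bool → Bool → ℝ)
    (hf20 : ∀ b x, 0 ≤ f2 b x) (hf2sum : ∀ x, f2 false x + f2 true x = 1)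
    (hf10 : ∀ b r, 0 ≤ f1 b r) (hf1sum : ∀ r, f1 false r + f1 true r = 1)
    (hf1pos : ∀ r2 : Bool, 0 < f1 true r2)
    (p : X1 → X2 → Bool → Bool → ℝ)
    (hp : ∀ x1 x2 r1 r2, p x1 x2 r1 r2 = q x1 x2 * f2 r2 x1 * f1 r1 r2) :
    -- (a) P(R₁ = 1 | R₂ = r₂) = f₁(1; r₂)
    (∀ r2 : Bool,
      0 < (∑ x1, ∑ x2, ∑ r1, p x1 x2 r1 r2) →
      (∑ x1, ∑ x2, p x1 x2 true r2) / (∑ x1, ∑ x2, ∑ r1, p x1 x2 r1 r2) = f1 true r2)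
    ∧
    -- (b) P(R₂ = 1 | X₁ = x₁) = f₂(1; x₁), identified by fixing R₁ to one
    (∀ x1 : X1,
      0 < (∑ x2, ∑ r1, ∑ r2, p x1 x2 r1 r2) →
      ((∑ x2, ∑ r1, p x1 x2 r1 true) / (∑ x2, ∑ r1, ∑ r2, p x1 x2 r1 r2) = f2 true x1
        ∧ f2 true x1
            = ((∑ x2, p x1 x2 true true) / f1 true true)
              / (∑ r2 : Bool, (∑ x2, p x1 x2 true r2) / f1 true r2))) :=
  stmt_3_general X1 X2 q f2 f1 hf2sum hf1sum hf1pos p hp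
end

section
/- Let m ≥ 1, let A_1, …, A_m ∈ ℱ be events, ℋ_1, …, ℋ_m ⊆ ℱ sub-σ-algebras, σ ∈ (0,1] a constant, and Y : Ω → ℝ an integrable random variable. Set π_i := P[A_i | ℋ_i] for each i and assume: (i) π_i ≥ σ almost surely for every i; and (ii) for every i ∈ {1,…,m}, the random variables Y, the indicators 1_{A_j} for all j > i, and the conditional probabilities π_j for all j > i are ℋ_i-measurable. Then E[∏_{i=1}^m (1_{A_i} / π_i) · Y] = E[Y]. -/
open MeasureTheory

/-!
Peel off the first factor. Since `ℋ₀` measures `Y` and every later factor, the rest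
`Z = ∏_{i ≥ 1} (1_{Aᵢ} / πᵢ) · Y` is `ℋ₀`-measurable, so pulling `Z / π₀` out of the conditional
expectation gives `E[1_{A₀} · Z / π₀] = E[π₀ · Z / π₀] = E[Z]`; induction on `m` finishes.
The lower bound `πᵢ ≥ σ > 0` keeps every partial product integrable.
-/

namespace MeasureTheory

variable {Ω : Type*} {mΩ : MeasurableSpace Ω} {μ : Measure Ω}

theorem Integrable.div_of_const_le {Z g : Ω → ℝ} (hZ : Integrable Z μ)
    (hg : AEStronglyMeasurable g μ) {σ : ℝ} (hσ : 0 < σ) (hσg : ∀ᵐ ω ∂μ, σ ≤ g ω) :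
    Integrable (fun ω => Z ω / g ω) μ := by
  refine (hZ.norm.const_mul σ⁻¹).mono' (hZ.1.div₀ hg) ?_
  filter_upwards [hσg] with ω hω
  rw [norm_div, Real.norm_of_nonneg (hσ.trans_le hω).le, div_eq_inv_mul]
  gcongr

variable [IsFiniteMeasure μ]

theorem integrable_indicator_div_condExp_mul_and_integral_eq {m : MeasurableSpace Ω}
    (hm : m ≤ mΩ) {s : Set Ω} (hs : MeasurableSet[mΩ] s) {σ : ℝ} (hσ : 0 < σ) {π : Ω → ℝ}
    (hπ : π = μ[s.indicator (fun _ => (1 : ℝ)) | m]) (hσπ : ∀ᵐ ω ∂μ, σ ≤ π ω)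
    {Z : Ω → ℝ} (hZm : Measurable[m] Z) (hZ : Integrable Z μ) :
    Integrable (fun ω => s.indicator (fun _ => (1 : ℝ)) ω / π ω * Z ω) μ ∧
      ∫ ω, s.indicator (fun _ => (1 : ℝ)) ω / π ω * Z ω ∂μ = ∫ ω, Z ω ∂μ := by
  have hπm : StronglyMeasurable[m] π := hπ ▸ stronglyMeasurable_condExp
  have hWm : StronglyMeasurable[m] (fun ω => Z ω / π ω) :=
    (hZm.div hπm.measurable).stronglyMeasurable
  have hW : Integrable (fun ω => Z ω / π ω) μ :=
    hZ.div_of_const_le (hπm.mono hm).aestronglyMeasurable hσ hσπ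
  have hreorder : (fun ω => s.indicator (fun _ => (1 : ℝ)) ω / π ω * Z ω) =
      (fun ω => Z ω / π ω) * s.indicator (fun _ => (1 : ℝ)) := by
    ext ω
    simp only [Pi.mul_apply]
    ring
  have hWs : Integrable ((fun ω => Z ω / π ω) * s.indicator (fun _ => (1 : ℝ))) μ := by
    refine (hW.indicator hs).congr (.of_forall fun ω => ?_)
    by_cases h : ω ∈ s <;> simp [h]
  refine ⟨hreorder ▸ hWs, ?_⟩
  calc ∫ ω, s.indicator (fun _ => (1 : ℝ)) ω / π ω * Z ω ∂μ
      = ∫ ω, μ[(fun ω => Z ω / π ω) * s.indicator (fun _ => (1 : ℝ)) | m] ω ∂μ := by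
        rw [integral_condExp hm, hreorder]
    _ = ∫ ω, Z ω / π ω * π ω ∂μ := by
        refine integral_congr_ae ?_
        filter_upwards [condExp_mul_of_stronglyMeasurable_left hWm hWs
          ((integrable_const 1).indicator hs)] with ω hω
        rw [hω, hπ, Pi.mul_apply]
    _ = ∫ ω, Z ω ∂μ := by
        refine integral_congr_ae ?_
        filter_upwards [hσπ] with ω hω
        exact div_mul_cancel₀ _ (hσ.trans_le hω).ne'

theorem integrable_prod_indicator_div_condExp_mul_and_integral_eq {n : ℕ}
    (A : Fin n → Set Ω) (hA : ∀ i, MeasurableSet (A i))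
    (H : Fin n → MeasurableSpace Ω) (hH : ∀ i, H i ≤ mΩ) {σ : ℝ} (hσ : 0 < σ)
    {Y : Ω → ℝ} (hY : Integrable Y μ) (π : Fin n → Ω → ℝ)
    (hπ : ∀ i, π i = μ[(A i).indicator (fun _ => (1 : ℝ)) | H i])
    (hσπ : ∀ i, ∀ᵐ ω ∂μ, σ ≤ π i ω)
    (hYm : ∀ i, Measurable[H i] Y)
    (hAm : ∀ i j : Fin n, i < j → MeasurableSet[H i] (A j))
    (hπm : ∀ i j : Fin n, i < j → Measurable[H i] (π j)) :
    Integrable (fun ω => (∏ i, (A i).indicator (fun _ => (1 : ℝ)) ω / π i ω) * Y ω) μ ∧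
      ∫ ω, (∏ i, (A i).indicator (fun _ => (1 : ℝ)) ω / π i ω) * Y ω ∂μ = ∫ ω, Y ω ∂μ := by
  induction n with
  | zero => simpa using hY
  | succ n ih =>
    obtain ⟨hZ, hZY⟩ := ih (A ∘ Fin.succ) (fun i => hA _) (H ∘ Fin.succ) (fun i => hH _)
      (π ∘ Fin.succ) (fun i => hπ _) (fun i => hσπ _) (fun i => hYm _)
      (fun i j hij => hAm _ _ (Fin.succ_lt_succ_iff.2 hij))
      (fun i j hij => hπm _ _ (Fin.succ_lt_succ_iff.2 hij))
    have hZm : Measurable[H 0] (fun ω =>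
        (∏ i : Fin n, (A i.succ).indicator (fun _ => (1 : ℝ)) ω / π i.succ ω) * Y ω) :=
      (Finset.measurable_prod _ fun i _ =>
        (measurable_const.indicator (hAm 0 i.succ i.succ_pos)).div
          (hπm 0 i.succ i.succ_pos)).mul (hYm 0)
    simp only [Fin.prod_univ_succ, mul_assoc]
    obtain ⟨hint, heq⟩ :=
      integrable_indicator_div_condExp_mul_and_integral_eq (hH 0) (hA 0) hσ (hπ 0) (hσπ 0) hZm hZ
    exact ⟨hint, heq.trans hZY⟩

end MeasureTheory

theorem stmt_9_general {Ω : Type*} [m0 : MeasurableSpace Ω]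
    (μ : Measure Ω) [IsProbabilityMeasure μ]
    (m : ℕ)
    (A : Fin m → Set Ω) (hA : ∀ i, MeasurableSet (A i))
    (H : Fin m → MeasurableSpace Ω) (hH : ∀ i, H i ≤ m0)
    (σ : ℝ) (hσ0 : 0 < σ)
    (Y : Ω → ℝ) (hYint : Integrable Y μ)
    (π : Fin m → Ω → ℝ)
    (hπ : ∀ i, π i = μ[(A i).indicator (fun _ => (1 : ℝ)) | H i])
    (hbound : ∀ i, ∀ᵐ ω ∂μ, σ ≤ π i ω)
    (hYmeas : ∀ i, Measurable[H i] Y)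
    (hAmeas : ∀ i j : Fin m, i < j → MeasurableSet[H i] (A j))
    (hπmeas : ∀ i j : Fin m, i < j → Measurable[H i] (π j)) :
    ∫ ω, (∏ i : Fin m, (A i).indicator (fun _ => (1 : ℝ)) ω / π i ω) * Y ω ∂μ
      = ∫ ω, Y ω ∂μ :=
  (integrable_prod_indicator_div_condExp_mul_and_integral_eq A hA H hH hσ0 hYint π hπ hbound
    hYmeas hAmeas hπmeas).2

/-- Telescoping recursive inverse probability weighting identity:
`E[∏ᵢ (1_{Aᵢ} / πᵢ) · Y] = E[Y]` when each `πᵢ = P[Aᵢ | ℋᵢ] ≥ σ > 0` a.s. and,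
for each `i`, `Y`, the indicators `1_{Aⱼ}` and the conditional probabilities
`πⱼ` for `j > i` are `ℋᵢ`-measurable. -/
theorem stmt_9 {Ω : Type*} [m0 : MeasurableSpace Ω]
    (μ : Measure Ω) [IsProbabilityMeasure μ]
    (m : ℕ) (hm : 1 ≤ m)
    (A : Fin m → Set Ω) (hA : ∀ i, MeasurableSet (A i))
    (H : Fin m → MeasurableSpace Ω) (hH : ∀ i, H i ≤ m0)
    (σ : ℝ) (hσ0 : 0 < σ) (hσ1 : σ ≤ 1)
    (Y : Ω → ℝ) (hYint : Integrable Y μ)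
    (π : Fin m → Ω → ℝ)
    (hπ : ∀ i, π i = μ[(A i).indicator (fun _ => (1 : ℝ)) | H i])
    (hbound : ∀ i, ∀ᵐ ω ∂μ, σ ≤ π i ω)
    (hYmeas : ∀ i, Measurable[H i] Y)
    (hAmeas : ∀ i j : Fin m, i < j → MeasurableSet[H i] (A j))
    (hπmeas : ∀ i j : Fin m, i < j → Measurable[H i] (π j)) :
    ∫ ω, (∏ i : Fin m, (A i).indicator (fun _ => (1 : ℝ)) ω / π i ω) * Y ω ∂μ
      = ∫ ω, Y ω ∂μ :=
  stmt_9_general (m0 := m0) μ m A hA H hH σ hσ0 Y hYint π hπ hbound hYmeas hAmeas hπmeas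
end

section
/- Let m ≥ 1, let A_1, …, A_m, B ∈ ℱ be events, let 𝒢 and ℋ_1, …, ℋ_m be sub-σ-algebras of ℱ, σ ∈ (0,1] a constant, and f : Ω → ℝ a bounded 𝒢-measurable random variable. Set π_i := P[A_i | ℋ_i] and assume: (i) π_i ≥ σ almost surely for every i; (ii) for every i, 𝒢 ⊆ ℋ_i, the indicator 1_B is ℋ_i-measurable, and the indicators 1_{A_j} and conditional probabilities π_j for all j > i are ℋ_i-measurable. Then the recursive inverse probability weighted estimating function for the propensity of B is unbiased: E[∏_{i=1}^m (1_{A_i} / π_i) · f · (1_B − P[B | 𝒢])] = 0. -/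
/-!
Conditioning on `ℋ₁` turns the weight `1_{A₁} / π₁` into `π₁ / π₁ = 1`, because everything else in
the integrand (the later weights and `f · (1_B − P[B | 𝒢])`) is `ℋ₁`-measurable by assumption.
Peeling the weights off one at a time leaves `E[f · (1_B − P[B | 𝒢])]`, which vanishes since `f`
is `𝒢`-measurable. The lower bound `σ` keeps every partial product integrable.
-/

open MeasureTheory

namespace MeasureTheory

variable {Ω : Type*}

theorem norm_indicator_one_div_le {A : Set Ω} {σ p : ℝ} (hσ : 0 < σ) (hp : σ ≤ p) (ω : Ω) :
    ‖A.indicator (fun _ => (1 : ℝ)) ω / p‖ ≤ σ⁻¹ := by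
  by_cases hω : ω ∈ A
  · rw [Set.indicator_of_mem hω, norm_div, norm_one, Real.norm_of_nonneg (hσ.trans_le hp).le]
    exact (one_div p).symm ▸ inv_anti₀ hσ hp
  · simpa [hω] using hσ.le

variable {m : MeasurableSpace Ω} [m0 : MeasurableSpace Ω] {μ : Measure Ω}

theorem integral_mul_condExp_of_stronglyMeasurable (hm : m ≤ m0)
    [SigmaFinite (μ.trim hm)] {f Y : Ω → ℝ} (hf : StronglyMeasurable[m] f)
    (hfY : Integrable (f * Y) μ) (hY : Integrable Y μ) :
    ∫ ω, f ω * (μ[Y | m]) ω ∂μ = ∫ ω, f ω * Y ω ∂μ :=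
  (integral_congr_ae (condExp_mul_of_stronglyMeasurable_left hf hfY hY)).symm.trans
    (integral_condExp hm)

theorem integral_mul_sub_condExp_eq_zero [IsFiniteMeasure μ] (hm : m ≤ m0) {f Y : Ω → ℝ}
    (hf : StronglyMeasurable[m] f) {C : ℝ} (hfC : ∀ᵐ ω ∂μ, ‖f ω‖ ≤ C) (hY : Integrable Y μ) :
    ∫ ω, f ω * (Y ω - (μ[Y | m]) ω) ∂μ = 0 := by
  have hf₀ : AEStronglyMeasurable f μ := (hf.mono hm).aestronglyMeasurable
  have hfY : Integrable (fun ω => f ω * Y ω) μ := hY.bdd_mul hf₀ hfC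
  have hfc : Integrable (fun ω => f ω * (μ[Y | m]) ω) μ := integrable_condExp.bdd_mul hf₀ hfC
  simp_rw [mul_sub]
  rw [integral_sub hfY hfc, integral_mul_condExp_of_stronglyMeasurable hm hf hfY hY]
  exact sub_self _

theorem integral_indicator_div_condExp_mul [IsFiniteMeasure μ] (hm : m ≤ m0) {A : Set Ω}
    (hA : MeasurableSet A) {π : Ω → ℝ} (hπ : π = μ[A.indicator (fun _ => (1 : ℝ)) | m])
    {σ : ℝ} (hσ : 0 < σ) (hπσ : ∀ᵐ ω ∂μ, σ ≤ π ω) {g : Ω → ℝ} (hg : Measurable[m] g) (hgi : Integrable g μ) :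
    Integrable (fun ω => A.indicator (fun _ => (1 : ℝ)) ω / π ω * g ω) μ ∧
      ∫ ω, A.indicator (fun _ => (1 : ℝ)) ω / π ω * g ω ∂μ = ∫ ω, g ω ∂μ := by
  have hπm : Measurable[m] π := hπ ▸ stronglyMeasurable_condExp.measurable
  have hπ₀ : Measurable[m0] π := hπm.mono hm le_rfl
  have hind : Integrable (A.indicator (fun _ => (1 : ℝ))) μ := (integrable_const 1).indicator hA
  have hint : Integrable (fun ω => A.indicator (fun _ => (1 : ℝ)) ω / π ω * g ω) μ :=
    hgi.bdd_mul ((measurable_const.indicator hA).div hπ₀).aestronglyMeasurable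
      (hπσ.mono fun ω hω => norm_indicator_one_div_le hσ hω ω)
  have hreorder : (fun ω => A.indicator (fun _ => (1 : ℝ)) ω / π ω * g ω)
      = (g / π) * A.indicator (fun _ => (1 : ℝ)) := by
    ext ω; simp only [Pi.mul_apply, Pi.div_apply]; ring
  have hcond := integral_mul_condExp_of_stronglyMeasurable hm (hg.div hπm).stronglyMeasurable
    (hreorder ▸ hint) hind
  rw [← hπ] at hcond
  refine ⟨hint, ?_⟩
  calc ∫ ω, A.indicator (fun _ => (1 : ℝ)) ω / π ω * g ω ∂μ
      = ∫ ω, (g / π) ω * π ω ∂μ := by rw [hreorder, hcond]; rfl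
    _ = ∫ ω, g ω ∂μ := integral_congr_ae <| hπσ.mono fun ω hω =>
        div_mul_cancel₀ (g ω) (hσ.trans_le hω).ne'

theorem integral_prod_indicator_div_condExp_mul [IsFiniteMeasure μ] {n : ℕ} (A : Fin n → Set Ω)
    (H : Fin n → MeasurableSpace Ω) (π : Fin n → Ω → ℝ) (hA : ∀ i, MeasurableSet (A i))
    (hH : ∀ i, H i ≤ m0) (hπ : ∀ i, π i = μ[(A i).indicator (fun _ => (1 : ℝ)) | H i])
    {σ : ℝ} (hσ : 0 < σ) (hπσ : ∀ i, ∀ᵐ ω ∂μ, σ ≤ π i ω)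
    (hAH : ∀ i j, i < j → MeasurableSet[H i] (A j)) (hπH : ∀ i j, i < j → Measurable[H i] (π j))
    {g : Ω → ℝ} (hg : ∀ i, Measurable[H i] g) (hgi : Integrable g μ) :
    Integrable (fun ω => (∏ i, (A i).indicator (fun _ => (1 : ℝ)) ω / π i ω) * g ω) μ ∧
      ∫ ω, (∏ i, (A i).indicator (fun _ => (1 : ℝ)) ω / π i ω) * g ω ∂μ = ∫ ω, g ω ∂μ := by
  induction n with
  | zero => simpa using hgi
  | succ n ih =>
    obtain ⟨htail_int, htail⟩ := ih (fun i => A i.succ) (fun i => H i.succ) (fun i => π i.succ)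
      (fun i => hA _) (fun i => hH _) (fun i => hπ _) (fun i => hπσ _)
      (fun i j hij => hAH _ _ (Fin.succ_lt_succ_iff.2 hij))
      (fun i j hij => hπH _ _ (Fin.succ_lt_succ_iff.2 hij)) (fun i => hg _)
    have htail_meas : Measurable[H 0]
        (fun ω => (∏ i : Fin n, (A i.succ).indicator (fun _ => (1 : ℝ)) ω / π i.succ ω) * g ω) :=
      (Finset.measurable_prod _ fun i _ => (measurable_const.indicator
        (hAH 0 i.succ i.succ_pos)).div (hπH 0 i.succ i.succ_pos)).mul (hg 0)
    obtain ⟨hint, hpeel⟩ :=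
      integral_indicator_div_condExp_mul (hH 0) (hA 0) (hπ 0) hσ (hπσ 0) htail_meas htail_int
    simp only [Fin.prod_univ_succ, mul_assoc]
    exact ⟨hint, hpeel.trans htail⟩

end MeasureTheory

theorem stmt_10_general {Ω : Type*} [m0 : MeasurableSpace Ω]
    (μ : Measure Ω) [IsProbabilityMeasure μ]
    (m : ℕ)
    (A : Fin m → Set Ω) (hA : ∀ i, MeasurableSet (A i))
    (B : Set Ω) (hB : MeasurableSet B)
    (G : MeasurableSpace Ω) (hG : G ≤ m0)
    (H : Fin m → MeasurableSpace Ω) (hH : ∀ i, H i ≤ m0)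
    (σ : ℝ) (hσ0 : 0 < σ)
    (f : Ω → ℝ) (hfmeas : Measurable[G] f) (C : ℝ) (hfbd : ∀ ω, |f ω| ≤ C)
    (π : Fin m → Ω → ℝ)
    (hπ : ∀ i, π i = μ[(A i).indicator (fun _ => (1 : ℝ)) | H i])
    (hbound : ∀ i, ∀ᵐ ω ∂μ, σ ≤ π i ω)
    (hGH : ∀ i, G ≤ H i)
    (hBmeas : ∀ i, MeasurableSet[H i] B)
    (hAmeas : ∀ i j : Fin m, i < j → MeasurableSet[H i] (A j))
    (hπmeas : ∀ i j : Fin m, i < j → Measurable[H i] (π j)) :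
    ∫ ω, (∏ i : Fin m, (A i).indicator (fun _ => (1 : ℝ)) ω / π i ω)
        * (f ω * (B.indicator (fun _ => (1 : ℝ)) ω
            - (μ[B.indicator (fun _ => (1 : ℝ)) | G]) ω)) ∂μ
      = 0 := by
  have hindB : Integrable (B.indicator (fun _ => (1 : ℝ))) μ := (integrable_const 1).indicator hB
  have hfC : ∀ᵐ ω ∂μ, ‖f ω‖ ≤ C := Filter.Eventually.of_forall hfbd
  have hg_meas : ∀ i, Measurable[H i]
      (fun ω => f ω * (B.indicator (fun _ => (1 : ℝ)) ω
        - (μ[B.indicator (fun _ => (1 : ℝ)) | G]) ω)) := fun i =>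
    (hfmeas.mono (hGH i) le_rfl).mul ((measurable_const.indicator (hBmeas i)).sub
      (stronglyMeasurable_condExp.measurable.mono (hGH i) le_rfl))
  have hg_int : Integrable (fun ω => f ω * (B.indicator (fun _ => (1 : ℝ)) ω
      - (μ[B.indicator (fun _ => (1 : ℝ)) | G]) ω)) μ :=
    (hindB.sub integrable_condExp).bdd_mul (hfmeas.mono hG le_rfl).aestronglyMeasurable hfC
  rw [(integral_prod_indicator_div_condExp_mul (m0 := m0) A H π hA hH hπ hσ0 hbound hAmeas
    hπmeas hg_meas hg_int).2]
  exact integral_mul_sub_condExp_eq_zero (m0 := m0) hG hfmeas.stronglyMeasurable hfC hindB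

/-- Unbiasedness of the recursive inverse probability weighted estimating
function for a propensity score:
`E[∏ᵢ (1_{Aᵢ} / πᵢ) · f · (1_B − P[B | 𝒢])] = 0`. -/
theorem stmt_10 {Ω : Type*} [m0 : MeasurableSpace Ω]
    (μ : Measure Ω) [IsProbabilityMeasure μ]
    (m : ℕ) (hm : 1 ≤ m)
    (A : Fin m → Set Ω) (hA : ∀ i, MeasurableSet (A i))
    (B : Set Ω) (hB : MeasurableSet B)
    (G : MeasurableSpace Ω) (hG : G ≤ m0)
    (H : Fin m → MeasurableSpace Ω) (hH : ∀ i, H i ≤ m0)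
    (σ : ℝ) (hσ0 : 0 < σ) (hσ1 : σ ≤ 1)
    (f : Ω → ℝ) (hfmeas : Measurable[G] f) (C : ℝ) (hfbd : ∀ ω, |f ω| ≤ C)
    (π : Fin m → Ω → ℝ)
    (hπ : ∀ i, π i = μ[(A i).indicator (fun _ => (1 : ℝ)) | H i])
    (hbound : ∀ i, ∀ᵐ ω ∂μ, σ ≤ π i ω)
    (hGH : ∀ i, G ≤ H i)
    (hBmeas : ∀ i, MeasurableSet[H i] B)
    (hAmeas : ∀ i j : Fin m, i < j → MeasurableSet[H i] (A j))
    (hπmeas : ∀ i j : Fin m, i < j → Measurable[H i] (π j)) :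
    ∫ ω, (∏ i : Fin m, (A i).indicator (fun _ => (1 : ℝ)) ω / π i ω)
        * (f ω * (B.indicator (fun _ => (1 : ℝ)) ω
            - (μ[B.indicator (fun _ => (1 : ℝ)) | G]) ω)) ∂μ
      = 0 :=
  stmt_10_general (m0 := m0) μ m A hA B hB G hG H hH σ hσ0 f hfmeas C hfbd π hπ hbound hGH hBmeas
    hAmeas hπmeas
end

section
/- Let m ≥ 1, let A_1, …, A_m ∈ ℱ be events, ℋ_1, …, ℋ_m ⊆ ℱ sub-σ-algebras, σ ∈ (0,1] a constant, Θ a nonempty set, and M : Ω × Θ → ℝ a map such that for every θ ∈ Θ the random variable M(·, θ) is integrable and is ℋ_i-measurable for every i. Set π_i := P[A_i | ℋ_i] and assume π_i ≥ σ almost surely and, for every i, the indicators 1_{A_j} and conditional probabilities π_j for all j > i are ℋ_i-measurable. Then for every θ ∈ Θ, E[∏_{i=1}^m (1_{A_i} / π_i) · M(·, θ)] = E[M(·, θ)]. Consequently, if θ_0 is the unique element of Θ with E[M(·, θ_0)] = 0, then θ_0 is also the unique element of Θ at which the inverse probability weighted moment E[∏_{i=1}^m (1_{A_i} / π_i) ·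 M(·, θ)] vanishes. -/
/-!
Write `r i = 1_{A i} / π i`. Since `π 0 = P[A 0 | H 0]` and every later factor, as well as `M`,
is `H 0`-measurable, pulling the `H 0`-measurable part out of the conditional expectation gives
`E[r 0 · Y] = E[Y / π 0 · P[A 0 | H 0]] = E[Y]` for `Y = (∏_{i > 0} r i) · M`; induction on the
number of factors peels them off one at a time. The lower bound `σ ≤ π i` keeps every weight
below `σ⁻¹`, which is what makes all the products integrable.
-/

open MeasureTheory

section

variable {Ω : Type*} {m0 : MeasurableSpace Ω} {μ : Measure Ω} {σ : ℝ}

lemma norm_indicator_one_div_le {A : Set Ω} {p : Ω → ℝ} (hσ : 0 < σ) {ω : Ω} (hp : σ ≤ p ω) :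
    ‖A.indicator (fun _ => (1 : ℝ)) ω / p ω‖ ≤ σ⁻¹ := by
  have hind : ‖A.indicator (fun _ => (1 : ℝ)) ω‖ ≤ 1 := by
    by_cases h : ω ∈ A <;> simp [h]
  rw [norm_div, Real.norm_of_nonneg (hσ.le.trans hp), ← one_div]
  exact div_le_div₀ zero_le_one hind hσ hp

lemma ae_norm_prod_indicator_div_le {n : ℕ} (A : Fin n → Set Ω) (π : Fin n → Ω → ℝ)
    (hσ : 0 < σ) (hbound : ∀ i, ∀ᵐ ω ∂μ, σ ≤ π i ω) :
    ∀ᵐ ω ∂μ, ‖∏ i, (A i).indicator (fun _ => (1 : ℝ)) ω / π i ω‖ ≤ σ⁻¹ ^ n := by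
  filter_upwards [ae_all_iff.2 hbound] with ω hω
  rw [norm_prod]
  calc ∏ i, ‖(A i).indicator (fun _ => (1 : ℝ)) ω / π i ω‖ ≤ ∏ _i : Fin n, σ⁻¹ :=
        Finset.prod_le_prod (fun _ _ => norm_nonneg _)
          fun i _ => norm_indicator_one_div_le hσ (hω i)
    _ = σ⁻¹ ^ n := by simp

theorem integral_indicator_div_condExp_mul [IsFiniteMeasure μ] {m : MeasurableSpace Ω}
    (hm : m ≤ m0) {A : Set Ω} (hA : MeasurableSet[m0] A) (hσ : 0 < σ)
    (hbound : ∀ᵐ ω ∂μ, σ ≤ μ[A.indicator (fun _ => (1 : ℝ)) | m] ω)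
    {g : Ω → ℝ} (hg : StronglyMeasurable[m] g) (hgi : Integrable g μ) :
    ∫ ω, A.indicator (fun _ => (1 : ℝ)) ω / μ[A.indicator (fun _ => (1 : ℝ)) | m] ω * g ω ∂μ
      = ∫ ω, g ω ∂μ := by
  set p := μ[A.indicator (fun _ => (1 : ℝ)) | m]
  have hp : StronglyMeasurable[m] p := stronglyMeasurable_condExp
  have hgp : StronglyMeasurable[m] (fun ω => g ω / p ω) :=
    (hg.measurable.div hp.measurable).stronglyMeasurable
  have hgp_int : Integrable (fun ω => g ω / p ω) μ := by
    have hinv : Integrable (fun ω => (p ω)⁻¹ * g ω) μ := by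
      refine hgi.bdd_mul (c := σ⁻¹) (hp.measurable.inv.mono hm le_rfl).aestronglyMeasurable ?_
      filter_upwards [hbound] with ω hω
      rw [norm_inv, Real.norm_of_nonneg (hσ.le.trans hω)]
      exact inv_anti₀ hσ hω
    simpa only [div_eq_inv_mul] using hinv
  have hind_int : Integrable (A.indicator (fun _ => (1 : ℝ))) μ :=
    (integrable_const 1).indicator hA
  have hprod_int : Integrable ((fun ω => g ω / p ω) * A.indicator (fun _ => (1 : ℝ))) μ := by
    refine (hgp_int.indicator hA).congr (Filter.Eventually.of_forall fun ω => ?_)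
    by_cases h : ω ∈ A <;> simp [h]
  calc ∫ ω, A.indicator (fun _ => (1 : ℝ)) ω / p ω * g ω ∂μ
      = ∫ ω, ((fun ω => g ω / p ω) * A.indicator (fun _ => (1 : ℝ))) ω ∂μ := by
        congr 1; ext ω; simp only [Pi.mul_apply]; ring
    _ = ∫ ω, μ[(fun ω => g ω / p ω) * A.indicator (fun _ => (1 : ℝ)) | m] ω ∂μ :=
        (integral_condExp hm).symm
    _ = ∫ ω, g ω / p ω * p ω ∂μ :=
        integral_congr_ae (condExp_mul_of_stronglyMeasurable_left hgp hprod_int hind_int)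
    _ = ∫ ω, g ω ∂μ := by
        refine integral_congr_ae ?_
        filter_upwards [hbound] with ω hω
        exact div_mul_cancel₀ _ (hσ.trans_le hω).ne'

theorem integral_prod_indicator_div_condExp_mul [IsFiniteMeasure μ] {n : ℕ}
    (A : Fin n → Set Ω) (hA : ∀ i, MeasurableSet (A i))
    (H : Fin n → MeasurableSpace Ω) (hH : ∀ i, H i ≤ m0) (hσ : 0 < σ)
    (π : Fin n → Ω → ℝ) (hπ : ∀ i, π i = μ[(A i).indicator (fun _ => (1 : ℝ)) | H i])
    (hbound : ∀ i, ∀ᵐ ω ∂μ, σ ≤ π i ω)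
    (hAmeas : ∀ i j : Fin n, i < j → MeasurableSet[H i] (A j))
    (hπmeas : ∀ i j : Fin n, i < j → Measurable[H i] (π j))
    {X : Ω → ℝ} (hXmeas : ∀ i, Measurable[H i] X) (hXint : Integrable X μ) :
    ∫ ω, (∏ i, (A i).indicator (fun _ => (1 : ℝ)) ω / π i ω) * X ω ∂μ = ∫ ω, X ω ∂μ := by
  induction n with
  | zero => simp
  | succ n ih =>
    set tail : Ω → ℝ := fun ω => ∏ i : Fin n, (A i.succ).indicator (fun _ => (1 : ℝ)) ω / π i.succ ω
    have htail_meas : Measurable[H 0] tail := Finset.measurable_prod _ fun i _ =>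
      (measurable_const.indicator (hAmeas 0 i.succ i.succ_pos)).div (hπmeas 0 i.succ i.succ_pos)
    have htail_int : Integrable (fun ω => tail ω * X ω) μ :=
      hXint.bdd_mul (htail_meas.mono (hH 0) le_rfl).aestronglyMeasurable
        (ae_norm_prod_indicator_div_le _ _ hσ fun i => hbound i.succ)
    calc ∫ ω, (∏ i, (A i).indicator (fun _ => (1 : ℝ)) ω / π i ω) * X ω ∂μ
        = ∫ ω, (A 0).indicator (fun _ => (1 : ℝ)) ω / π 0 ω * (tail ω * X ω) ∂μ := by
          simp only [Fin.prod_univ_succ, mul_assoc, tail]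
      _ = ∫ ω, tail ω * X ω ∂μ := by
          rw [hπ 0]
          exact integral_indicator_div_condExp_mul (hH 0) (hA 0) hσ (hπ 0 ▸ hbound 0)
            (htail_meas.mul (hXmeas 0)).stronglyMeasurable htail_int
      _ = ∫ ω, X ω ∂μ :=
          ih (fun i => A i.succ) (fun i => hA i.succ) (fun i => H i.succ) (fun i => hH i.succ)
            (fun i => π i.succ) (fun i => hπ i.succ) (fun i => hbound i.succ)
            (fun i j hij => hAmeas i.succ j.succ (Fin.succ_lt_succ_iff.2 hij))
            (fun i j hij => hπmeas i.succ j.succ (Fin.succ_lt_succ_iff.2 hij))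
            (fun i => hXmeas i.succ)
end

theorem stmt_11_general {Ω : Type*} [m0 : MeasurableSpace Ω]
    (μ : Measure Ω) [IsProbabilityMeasure μ]
    (m : ℕ)
    (A : Fin m → Set Ω) (hA : ∀ i, MeasurableSet (A i))
    (H : Fin m → MeasurableSpace Ω) (hH : ∀ i, H i ≤ m0)
    (σ : ℝ) (hσ0 : 0 < σ)
    (Θ : Type*)
    (M : Ω → Θ → ℝ)
    (hMint : ∀ θ : Θ, Integrable (fun ω => M ω θ) μ)
    (hMmeas : ∀ (i : Fin m) (θ : Θ), Measurable[H i] (fun ω => M ω θ))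
    (π : Fin m → Ω → ℝ)
    (hπ : ∀ i, π i = μ[(A i).indicator (fun _ => (1 : ℝ)) | H i])
    (hbound : ∀ i, ∀ᵐ ω ∂μ, σ ≤ π i ω)
    (hAmeas : ∀ i j : Fin m, i < j → MeasurableSet[H i] (A j))
    (hπmeas : ∀ i j : Fin m, i < j → Measurable[H i] (π j)) :
    (∀ θ : Θ,
      ∫ ω, (∏ i : Fin m, (A i).indicator (fun _ => (1 : ℝ)) ω / π i ω) * M ω θ ∂μ
        = ∫ ω, M ω θ ∂μ)
    ∧
    (∀ θ0 : Θ,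
      ((∫ ω, M ω θ0 ∂μ) = 0 ∧ ∀ θ : Θ, (∫ ω, M ω θ ∂μ) = 0 → θ = θ0) →
      ((∫ ω, (∏ i : Fin m, (A i).indicator (fun _ => (1 : ℝ)) ω / π i ω) * M ω θ0 ∂μ) = 0
        ∧ ∀ θ : Θ,
            (∫ ω, (∏ i : Fin m, (A i).indicator (fun _ => (1 : ℝ)) ω / π i ω) * M ω θ ∂μ) = 0
            → θ = θ0)) := by
  have hweighted : ∀ θ : Θ,
      ∫ ω, (∏ i : Fin m, (A i).indicator (fun _ => (1 : ℝ)) ω / π i ω) * M ω θ ∂μ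
        = ∫ ω, M ω θ ∂μ := fun θ =>
    integral_prod_indicator_div_condExp_mul A hA H hH hσ0 π hπ hbound hAmeas hπmeas
      (fun i => hMmeas i θ) (hMint θ)
  refine ⟨hweighted, fun θ0 ⟨hroot, hunique⟩ => ⟨(hweighted θ0).trans hroot, fun θ hθ => ?_⟩⟩
  exact hunique θ ((hweighted θ).symm.trans hθ)

/-- The inverse probability weighted moment condition has the same expectation,
hence the same unique root, as the complete-data moment condition. -/
theorem stmt_11 {Ω : Type*} [m0 : MeasurableSpace Ω]
    (μ : Measure Ω) [IsProbabilityMeasure μ]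
    (m : ℕ) (hm : 1 ≤ m)
    (A : Fin m → Set Ω) (hA : ∀ i, MeasurableSet (A i))
    (H : Fin m → MeasurableSpace Ω) (hH : ∀ i, H i ≤ m0)
    (σ : ℝ) (hσ0 : 0 < σ) (hσ1 : σ ≤ 1)
    (Θ : Type*) [Nonempty Θ]
    (M : Ω → Θ → ℝ)
    (hMint : ∀ θ : Θ, Integrable (fun ω => M ω θ) μ)
    (hMmeas : ∀ (i : Fin m) (θ : Θ), Measurable[H i] (fun ω => M ω θ))
    (π : Fin m → Ω → ℝ)
    (hπ : ∀ i, π i = μ[(A i).indicator (fun _ => (1 : ℝ)) | H i])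
    (hbound : ∀ i, ∀ᵐ ω ∂μ, σ ≤ π i ω)
    (hAmeas : ∀ i j : Fin m, i < j → MeasurableSet[H i] (A j))
    (hπmeas : ∀ i j : Fin m, i < j → Measurable[H i] (π j)) :
    (∀ θ : Θ,
      ∫ ω, (∏ i : Fin m, (A i).indicator (fun _ => (1 : ℝ)) ω / π i ω) * M ω θ ∂μ
        = ∫ ω, M ω θ ∂μ)
    ∧
    (∀ θ0 : Θ,
      ((∫ ω, M ω θ0 ∂μ) = 0 ∧ ∀ θ : Θ, (∫ ω, M ω θ ∂μ) = 0 → θ = θ0) →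
      ((∫ ω, (∏ i : Fin m, (A i).indicator (fun _ => (1 : ℝ)) ω / π i ω) * M ω θ0 ∂μ) = 0
        ∧ ∀ θ : Θ,
            (∫ ω, (∏ i : Fin m, (A i).indicator (fun _ => (1 : ℝ)) ω / π i ω) * M ω θ ∂μ) = 0
            → θ = θ0)) :=
  stmt_11_general (m0 := m0) μ m A hA H hH σ hσ0 Θ M hMint hMmeas π hπ hbound hAmeas hπmeas
end

section
/- (a) For every r_3 ∈ {0,1} with P(R_3 = r_3) > 0, P(R_2 = 1 | R_3 = r_3) = f_2(1; r_3). (b) Define φ(x, r_1, r_3) := p(x, r_1, 1, r_3) / f_2(1; r_3) (the law obtained by fixing R_2 to one). Then φ is a probability mass function on 𝒳 × {0,1}², and under (X, R_1, R_3) distributed according to φ, the indicators R_1 and R_3 are conditionally independent given X_1: for every x_1 with positive φ-probability of {X_1 = x_1} and all r_1, r_3 ∈ {0,1}, P_φ(R_1 = r_1, R_3 = r_3 | X_1 = x_1) = P_φ(R_1 = r_1 | X_1 = x_1) · P_φ(R_3 = r_3 | X_1 = x_1). Moreover, for every x_1 with P_φ(X_1 = x_1, R_1 = 1) > 0, P_φ(R_3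 = 1 | X_1 = x_1, R_1 = 1) = f_3(1; x_1), and f_3(1; x_1) = P(R_3 = 1 | X_1 = x_1) whenever P(X_1 = x_1) > 0; hence the propensity score of R_3 is identified by intervening on R_2. -/
/-!
Intervening on `R₂` cuts the only path `R₃ → R₂ → R₁` between the two indicators: dividing
out `f₂(1; r₃)` leaves `φ(x, r₁, r₃) = q(x) f₃(r₃; x₁) f₁(r₁; x₃, 1)`, a product of a factor
in `r₃` depending on `x₁` alone and a factor free of `r₃`. Every claimed conditional is then a
ratio in which the numerator is a constant multiple of the denominator, the constant being the
asserted value.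
-/

open Finset

namespace DescendantIntervention

variable {X1 X2 X3 : Type}

def fullLaw (q : X1 → X2 → X3 → ℝ) (f3 : Bool → X1 → ℝ) (f2 : Bool → Bool → ℝ)
    (f1 : Bool → X3 → Bool → ℝ) (a : X1) (b : X2) (c : X3) (r1 r2 r3 : Bool) : ℝ :=
  q a b c * f3 r3 a * f2 r2 r3 * f1 r1 c r2

noncomputable def intervenedLaw (q : X1 → X2 → X3 → ℝ) (f3 : Bool → X1 → ℝ)
    (f2 : Bool → Bool → ℝ) (f1 : Bool → X3 → Bool → ℝ) (a : X1) (b : X2) (c : X3)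
    (r1 r3 : Bool) : ℝ :=
  fullLaw q f3 f2 f1 a b c r1 true r3 / f2 true r3

variable {q : X1 → X2 → X3 → ℝ} {f3 : Bool → X1 → ℝ}
  {f2 : Bool → Bool → ℝ} {f1 : Bool → X3 → Bool → ℝ}

section FullLaw

variable (hf1sum : ∀ c r, f1 false c r + f1 true c r = 1)
include hf1sum

theorem sum_fullLaw_r1 (a : X1) (b : X2) (c : X3) (r2 r3 : Bool) :
    ∑ r1, fullLaw q f3 f2 f1 a b c r1 r2 r3 = q a b c * f3 r3 a * f2 r2 r3 := by
  simp only [fullLaw, Fintype.sum_bool]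
  linear_combination q a b c * f3 r3 a * f2 r2 r3 * hf1sum c r2

theorem sum_fullLaw_r1_r2 (hf2sum : ∀ r, f2 false r + f2 true r = 1)
    (a : X1) (b : X2) (c : X3) (r3 : Bool) :
    ∑ r1, ∑ r2, fullLaw q f3 f2 f1 a b c r1 r2 r3 = q a b c * f3 r3 a := by
  rw [Finset.sum_comm, Fintype.sum_bool, sum_fullLaw_r1 hf1sum, sum_fullLaw_r1 hf1sum,
    ← mul_add, add_comm, hf2sum, mul_one]

theorem sum_fullLaw (hf2sum : ∀ r, f2 false r + f2 true r = 1)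
    (hf3sum : ∀ a, f3 false a + f3 true a = 1) (a : X1) (b : X2) (c : X3) :
    ∑ r1, ∑ r2, ∑ r3, fullLaw q f3 f2 f1 a b c r1 r2 r3 = q a b c := by
  calc ∑ r1, ∑ r2, ∑ r3, fullLaw q f3 f2 f1 a b c r1 r2 r3
      = ∑ r3, ∑ r1, ∑ r2, fullLaw q f3 f2 f1 a b c r1 r2 r3 :=
        (sum_congr rfl fun _ _ => sum_comm).trans sum_comm
    _ = ∑ r3, q a b c * f3 r3 a := by simp only [sum_fullLaw_r1_r2 hf1sum hf2sum]
    _ = q a b c := by rw [← mul_sum, Fintype.sum_bool, add_comm, hf3sum, mul_one]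

theorem fullLaw_cond_r2_eq [Fintype X1] [Fintype X2] [Fintype X3]
    (hf2sum : ∀ r, f2 false r + f2 true r = 1) (r3 : Bool)
    (hD : ∑ a, ∑ b, ∑ c, ∑ r1, ∑ r2, fullLaw q f3 f2 f1 a b c r1 r2 r3 ≠ 0) :
    (∑ a, ∑ b, ∑ c, ∑ r1, fullLaw q f3 f2 f1 a b c r1 true r3)
      / (∑ a, ∑ b, ∑ c, ∑ r1, ∑ r2, fullLaw q f3 f2 f1 a b c r1 r2 r3) = f2 true r3 := by
  rw [div_eq_iff hD, mul_comm]
  simp only [sum_fullLaw_r1 hf1sum, sum_fullLaw_r1_r2 hf1sum hf2sum, sum_mul]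

theorem fullLaw_cond_r3_eq [Fintype X2] [Fintype X3]
    (hf2sum : ∀ r, f2 false r + f2 true r = 1) (hf3sum : ∀ a, f3 false a + f3 true a = 1)
    (a : X1) (hD : ∑ b, ∑ c, ∑ r1, ∑ r2, ∑ r3, fullLaw q f3 f2 f1 a b c r1 r2 r3 ≠ 0) :
    (∑ b, ∑ c, ∑ r1, ∑ r2, fullLaw q f3 f2 f1 a b c r1 r2 true)
      / (∑ b, ∑ c, ∑ r1, ∑ r2, ∑ r3, fullLaw q f3 f2 f1 a b c r1 r2 r3) = f3 true a := by
  rw [div_eq_iff hD, mul_comm]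
  simp only [sum_fullLaw_r1_r2 hf1sum hf2sum, sum_fullLaw hf1sum hf2sum hf3sum, sum_mul]

end FullLaw

section IntervenedLaw

variable (hf2 : ∀ r, f2 true r ≠ 0)
include hf2

theorem intervenedLaw_eq (a : X1) (b : X2) (c : X3) (r1 r3 : Bool) :
    intervenedLaw q f3 f2 f1 a b c r1 r3 = f3 r3 a * (q a b c * f1 r1 c true) := by
  rw [intervenedLaw, fullLaw, div_eq_iff (hf2 r3)]
  ring

theorem sum_intervenedLaw_r3 (hf3sum : ∀ a, f3 false a + f3 true a = 1)
    (a : X1) (b : X2) (c : X3) (r1 : Bool) :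
    ∑ r3, intervenedLaw q f3 f2 f1 a b c r1 r3 = q a b c * f1 r1 c true := by
  simp only [intervenedLaw_eq hf2, ← sum_mul, Fintype.sum_bool]
  rw [add_comm, hf3sum, one_mul]

theorem sum_intervenedLaw_r1 (hf1sum : ∀ c r, f1 false c r + f1 true c r = 1)
    (a : X1) (b : X2) (c : X3) (r3 : Bool) :
    ∑ r1, intervenedLaw q f3 f2 f1 a b c r1 r3 = f3 r3 a * q a b c := by
  simp only [intervenedLaw_eq hf2, Fintype.sum_bool]
  linear_combination f3 r3 a * q a b c * hf1sum c true

theorem sum_intervenedLaw (hf1sum : ∀ c r, f1 false c r + f1 true c r = 1)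
    (hf3sum : ∀ a, f3 false a + f3 true a = 1) (a : X1) (b : X2) (c : X3) :
    ∑ r1, ∑ r3, intervenedLaw q f3 f2 f1 a b c r1 r3 = q a b c := by
  simp only [sum_intervenedLaw_r3 hf2 hf3sum, ← mul_sum, Fintype.sum_bool]
  rw [add_comm, hf1sum, mul_one]

theorem sum_intervenedLaw_eq_one [Fintype X1] [Fintype X2] [Fintype X3]
    (hf1sum : ∀ c r, f1 false c r + f1 true c r = 1)
    (hf3sum : ∀ a, f3 false a + f3 true a = 1) (hq1 : ∑ a, ∑ b, ∑ c, q a b c = 1) :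
    ∑ a, ∑ b, ∑ c, ∑ r1, ∑ r3, intervenedLaw q f3 f2 f1 a b c r1 r3 = 1 := by
  simp only [sum_intervenedLaw hf2 hf1sum hf3sum, hq1]

theorem intervenedLaw_condIndep [Fintype X2] [Fintype X3]
    (hf1sum : ∀ c r, f1 false c r + f1 true c r = 1)
    (hf3sum : ∀ a, f3 false a + f3 true a = 1) (a : X1)
    (hD : ∑ b, ∑ c, ∑ r1, ∑ r3, intervenedLaw q f3 f2 f1 a b c r1 r3 ≠ 0) (r1 r3 : Bool) :
    (∑ b, ∑ c, intervenedLaw q f3 f2 f1 a b c r1 r3)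
        / (∑ b, ∑ c, ∑ u, ∑ v, intervenedLaw q f3 f2 f1 a b c u v)
      = ((∑ b, ∑ c, ∑ v, intervenedLaw q f3 f2 f1 a b c r1 v)
          / (∑ b, ∑ c, ∑ u, ∑ v, intervenedLaw q f3 f2 f1 a b c u v))
        * ((∑ b, ∑ c, ∑ u, intervenedLaw q f3 f2 f1 a b c u r3)
          / (∑ b, ∑ c, ∑ u, ∑ v, intervenedLaw q f3 f2 f1 a b c u v)) := by
  simp only [sum_intervenedLaw hf2 hf1sum hf3sum] at hD ⊢
  simp only [sum_intervenedLaw_r3 hf2 hf3sum, sum_intervenedLaw_r1 hf2 hf1sum]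
  simp only [intervenedLaw_eq hf2, ← mul_sum]
  field_simp

theorem intervenedLaw_cond_r3_eq [Fintype X2] [Fintype X3]
    (hf3sum : ∀ a, f3 false a + f3 true a = 1) (a : X1)
    (hD : ∑ b, ∑ c, ∑ r3, intervenedLaw q f3 f2 f1 a b c true r3 ≠ 0) :
    (∑ b, ∑ c, intervenedLaw q f3 f2 f1 a b c true true)
      / (∑ b, ∑ c, ∑ r3, intervenedLaw q f3 f2 f1 a b c true r3) = f3 true a := by
  rw [div_eq_iff hD]
  simp only [sum_intervenedLaw_r3 hf2 hf3sum]
  simp only [intervenedLaw_eq hf2, ← mul_sum]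

end IntervenedLaw

end DescendantIntervention

open DescendantIntervention

theorem stmt_14_general
    (X1 X2 X3 : Type) [Fintype X1] [Fintype X2] [Fintype X3]
    (q : X1 → X2 → X3 → ℝ)
    (hq1 : (∑ a, ∑ b, ∑ c, q a b c) = 1)
    (f3 : Bool → X1 → ℝ) (f2 : Bool → Bool → ℝ) (f1 : Bool → X3 → Bool → ℝ)
    (hf3sum : ∀ a, f3 false a + f3 true a = 1)
    (hf2sum : ∀ r, f2 false r + f2 true r = 1)
    (hf2pos : ∀ r3 : Bool, 0 < f2 true r3)
    (hf1sum : ∀ c r, f1 false c r + f1 true c r = 1)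
    (p : X1 → X2 → X3 → Bool → Bool → Bool → ℝ)
    (hp : ∀ a b c r1 r2 r3, p a b c r1 r2 r3 = q a b c * f3 r3 a * f2 r2 r3 * f1 r1 c r2)
    (φ : X1 → X2 → X3 → Bool → Bool → ℝ)
    (hφ : ∀ a b c r1 r3, φ a b c r1 r3 = p a b c r1 true r3 / f2 true r3) :
    -- (a) P(R₂ = 1 | R₃ = r₃) = f₂(1; r₃)
    (∀ r3 : Bool,
      0 < (∑ a, ∑ b, ∑ c, ∑ r1, ∑ r2, p a b c r1 r2 r3) →
      (∑ a, ∑ b, ∑ c, ∑ r1, p a b c r1 true r3)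
        / (∑ a, ∑ b, ∑ c, ∑ r1, ∑ r2, p a b c r1 r2 r3) = f2 true r3)
    ∧
    -- (b) φ is a probability mass function
    ((∑ a, ∑ b, ∑ c, ∑ r1, ∑ r3, φ a b c r1 r3) = 1)
    ∧
    -- under φ, R₁ ⫫ R₃ | X₁
    (∀ a : X1,
      0 < (∑ b, ∑ c, ∑ r1, ∑ r3, φ a b c r1 r3) →
      ∀ r1 r3 : Bool,
        (∑ b, ∑ c, φ a b c r1 r3) / (∑ b, ∑ c, ∑ u, ∑ v, φ a b c u v)
          = ((∑ b, ∑ c, ∑ v, φ a b c r1 v) / (∑ b, ∑ c, ∑ u, ∑ v, φ a b c u v))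
            * ((∑ b, ∑ c, ∑ u, φ a b c u r3) / (∑ b, ∑ c, ∑ u, ∑ v, φ a b c u v)))
    ∧
    -- P_φ(R₃ = 1 | X₁ = x₁, R₁ = 1) = f₃(1; x₁)
    (∀ a : X1,
      0 < (∑ b, ∑ c, ∑ r3, φ a b c true r3) →
      (∑ b, ∑ c, φ a b c true true) / (∑ b, ∑ c, ∑ r3, φ a b c true r3) = f3 true a)
    ∧
    -- f₃(1; x₁) = P(R₃ = 1 | X₁ = x₁)
    (∀ a : X1,
      0 < (∑ b, ∑ c, ∑ r1, ∑ r2, ∑ r3, p a b c r1 r2 r3) →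
      (∑ b, ∑ c, ∑ r1, ∑ r2, p a b c r1 r2 true)
        / (∑ b, ∑ c, ∑ r1, ∑ r2, ∑ r3, p a b c r1 r2 r3) = f3 true a) := by
  obtain rfl : p = fullLaw q f3 f2 f1 := by
    funext a b c r1 r2 r3; exact hp a b c r1 r2 r3
  obtain rfl : φ = intervenedLaw q f3 f2 f1 := by
    funext a b c r1 r3; exact hφ a b c r1 r3
  have hf2 : ∀ r, f2 true r ≠ 0 := fun r => (hf2pos r).ne'
  exact ⟨fun r3 hD => fullLaw_cond_r2_eq hf1sum hf2sum r3 hD.ne',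
    sum_intervenedLaw_eq_one hf2 hf1sum hf3sum hq1,
    fun a hD => intervenedLaw_condIndep hf2 hf1sum hf3sum a hD.ne',
    fun a hD => intervenedLaw_cond_r3_eq hf2 hf3sum a hD.ne',
    fun a hD => fullLaw_cond_r3_eq hf1sum hf2sum hf3sum a hD.ne'⟩

/-- Three-variable model with an admissible descendant intervention
(graph `X₁ → R₃, R₃ → R₂, R₂ → R₁, X₃ → R₁`):
(a) the propensity score of `R₂` given `R₃` equals `f₂`;
(b) fixing `R₂` to one yields a probability mass function `φ` under which `R₁`
and `R₃` are conditionally independent given `X₁`, the `φ`-conditional of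
`R₃ = 1` given `X₁` and `R₁ = 1` equals `f₃(1; x₁)`, and `f₃(1; x₁)` equals the
propensity score `P(R₃ = 1 | X₁ = x₁)`; hence the propensity score of `R₃` is
identified by intervening on `R₂`. -/
theorem stmt_14
    (X1 X2 X3 : Type) [Fintype X1] [Fintype X2] [Fintype X3]
    [Nonempty X1] [Nonempty X2] [Nonempty X3]
    (q : X1 → X2 → X3 → ℝ) (hq0 : ∀ a b c, 0 ≤ q a b c)
    (hq1 : (∑ a, ∑ b, ∑ c, q a b c) = 1)
    (f3 : Bool → X1 → ℝ) (f2 : Bool → Bool → ℝ) (f1 : Bool → X3 → Bool → ℝ)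
    (hf30 : ∀ b a, 0 ≤ f3 b a) (hf3sum : ∀ a, f3 false a + f3 true a = 1)
    (hf20 : ∀ b r, 0 ≤ f2 b r) (hf2sum : ∀ r, f2 false r + f2 true r = 1)
    (hf2pos : ∀ r3 : Bool, 0 < f2 true r3)
    (hf10 : ∀ b c r, 0 ≤ f1 b c r) (hf1sum : ∀ c r, f1 false c r + f1 true c r = 1)
    (p : X1 → X2 → X3 → Bool → Bool → Bool → ℝ)
    (hp : ∀ a b c r1 r2 r3, p a b c r1 r2 r3 = q a b c * f3 r3 a * f2 r2 r3 * f1 r1 c r2)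
    (φ : X1 → X2 → X3 → Bool → Bool → ℝ)
    (hφ : ∀ a b c r1 r3, φ a b c r1 r3 = p a b c r1 true r3 / f2 true r3) :
    -- (a) P(R₂ = 1 | R₃ = r₃) = f₂(1; r₃)
    (∀ r3 : Bool,
      0 < (∑ a, ∑ b, ∑ c, ∑ r1, ∑ r2, p a b c r1 r2 r3) →
      (∑ a, ∑ b, ∑ c, ∑ r1, p a b c r1 true r3)
        / (∑ a, ∑ b, ∑ c, ∑ r1, ∑ r2, p a b c r1 r2 r3) = f2 true r3)
    ∧
    -- (b) φ is a probability mass function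
    ((∑ a, ∑ b, ∑ c, ∑ r1, ∑ r3, φ a b c r1 r3) = 1)
    ∧
    -- under φ, R₁ ⫫ R₃ | X₁
    (∀ a : X1,
      0 < (∑ b, ∑ c, ∑ r1, ∑ r3, φ a b c r1 r3) →
      ∀ r1 r3 : Bool,
        (∑ b, ∑ c, φ a b c r1 r3) / (∑ b, ∑ c, ∑ u, ∑ v, φ a b c u v)
          = ((∑ b, ∑ c, ∑ v, φ a b c r1 v) / (∑ b, ∑ c, ∑ u, ∑ v, φ a b c u v))
            * ((∑ b, ∑ c, ∑ u, φ a b c u r3) / (∑ b, ∑ c, ∑ u, ∑ v, φ a b c u v)))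
    ∧
    -- P_φ(R₃ = 1 | X₁ = x₁, R₁ = 1) = f₃(1; x₁)
    (∀ a : X1,
      0 < (∑ b, ∑ c, ∑ r3, φ a b c true r3) →
      (∑ b, ∑ c, φ a b c true true) / (∑ b, ∑ c, ∑ r3, φ a b c true r3) = f3 true a)
    ∧
    -- f₃(1; x₁) = P(R₃ = 1 | X₁ = x₁)
    (∀ a : X1,
      0 < (∑ b, ∑ c, ∑ r1, ∑ r2, ∑ r3, p a b c r1 r2 r3) →
      (∑ b, ∑ c, ∑ r1, ∑ r2, p a b c r1 r2 true)
        / (∑ b, ∑ c, ∑ r1, ∑ r2, ∑ r3, p a b c r1 r2 r3) = f3 true a) :=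
  stmt_14_general X1 X2 X3 q hq1 f3 f2 f1 hf3sum hf2sum hf2pos hf1sum p hp φ hφ
end

section
/- Assume f_1(1; x, s) > 0 for all (x, s) ∈ 𝒳 × {0,1}^{K−1}, and define the weight W := 1 / f_1(1; X, (R_2, …, R_K)). Then for every k ∈ {2,…,K}, every x ∈ 𝒳 and every (r_{k+1},…,r_K) ∈ {0,1}^{K−k} such that P(X = x, R_{k+1} = r_{k+1}, …, R_K = r_K, R_1 = 1) > 0, the propensity score of R_k admits the observed-data ratio representation f_k(1; x, (r_{k+1},…,r_K)) = E[1_{R_k = 1} · W | X = x, R_{k+1} = r_{k+1}, …, R_K = r_K, R_1 = 1] / E[W | X = x, R_{k+1} = r_{k+1}, …, R_K = r_K, R_1 = 1], where the conditional expectations are taken under (X, R) distributed according to p given the displayed event. -/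
/-!
On the event `R₁ = 1` the weight `W` cancels the factor of `R₁` in `p`, so `W · p` is `q(x)` times
the factors of `R₂, …, R_K`. Each factor `f_i` depends only on the later indicators, so `R_i`
occurs in no factor but its own; summing out `R₂, …, R_{k-1}` in increasing order therefore
replaces each of their factors by `1`. The factors above `k` are fixed by the conditioning, so both
expectations are the same constant `q(x) ∏_{i>k} f_i` times `f_k(1; x, s)` and `1` respectively,
and this constant is nonzero because the conditioning event has positive probability.
-/

open Finset

section Chain

variable {ι : Type*} [LinearOrder ι]

def DependsOnlyAbove (g : ι → Bool → (ι → Bool) → ℝ) : Prop :=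
  ∀ i b (r r' : ι → Bool), (∀ j, i < j → r j = r' j) → g i b r = g i b r'

theorem prod_congr_of_dependsOnlyAbove {g : ι → Bool → (ι → Bool) → ℝ} (hg : DependsOnlyAbove g)
    (U : Finset ι) {r r' : ι → Bool} (h : ∀ i ∈ U, ∀ j, i ≤ j → r j = r' j) :
    ∏ i ∈ U, g i (r i) r = ∏ i ∈ U, g i (r' i) r' :=
  prod_congr rfl fun i hi => by
    rw [h i hi i le_rfl]
    exact hg i _ r r' fun j hj => h i hi j hj.le

variable [Fintype ι]

def agreeOutside (T : Finset ι) (s : ι → Bool) : Finset (ι → Bool) :=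
  univ.filter fun r => ∀ i ∉ T, r i = s i

theorem mem_agreeOutside {T : Finset ι} {s r : ι → Bool} :
    r ∈ agreeOutside T s ↔ ∀ i ∉ T, r i = s i := by
  simp [agreeOutside]

theorem agreeOutside_empty (s : ι → Bool) : agreeOutside ∅ s = {s} := by
  ext r
  simp [mem_agreeOutside, funext_iff]

theorem sum_agreeOutside_insert {M : Type*} [AddCommMonoid M] {a : ι} {T : Finset ι}
    (ha : a ∉ T) (s : ι → Bool) (G : (ι → Bool) → M) :
    ∑ r ∈ agreeOutside (insert a T) s, G r
      = ∑ b, ∑ r ∈ agreeOutside T (Function.update s a b), G r := by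
  rw [← sum_fiberwise (agreeOutside (insert a T) s) (fun r => r a)]
  refine sum_congr rfl fun b _ => sum_congr ?_ fun _ _ => rfl
  ext r
  simp only [mem_filter, mem_agreeOutside, mem_insert, not_or, Function.update_apply]
  constructor
  · rintro ⟨hr, rfl⟩ i hi
    split_ifs with h
    · exact h ▸ rfl
    · exact hr i ⟨h, hi⟩
  · intro hr
    refine ⟨fun i hi => by simpa [hi.1] using hr i hi.2, by simpa using hr a ha⟩

theorem sum_mul_prod_insert_of_forall_lt {g : ι → Bool → (ι → Bool) → ℝ}
    (hg : DependsOnlyAbove g) {a : ι} {T : Finset ι} (hT : ∀ i ∈ T, i < a)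
    (hT1 : ∀ s, ∑ r ∈ agreeOutside T s, ∏ i ∈ T, g i (r i) r = 1) (c : Bool → ℝ)
    (s : ι → Bool) :
    ∑ r ∈ agreeOutside (insert a T) s, c (r a) * ∏ i ∈ insert a T, g i (r i) r
      = ∑ b, c b * g a b s := by
  have ha : a ∉ T := fun h => lt_irrefl a (hT a h)
  rw [sum_agreeOutside_insert ha]
  refine sum_congr rfl fun b _ => ?_
  calc ∑ r ∈ agreeOutside T (Function.update s a b), c (r a) * ∏ i ∈ insert a T, g i (r i) r
      = ∑ r ∈ agreeOutside T (Function.update s a b), c b * g a b s * ∏ i ∈ T, g i (r i) r := by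
        refine sum_congr rfl fun r hr => ?_
        rw [mem_agreeOutside] at hr
        have hra : r a = b := by simpa using hr a ha
        have hga : g a b r = g a b s := hg a b r s fun j hj => by
          simpa [hj.ne'] using hr j fun hjT => lt_asymm hj (hT j hjT)
        rw [prod_insert ha, hra, hga, mul_assoc]
    _ = c b * g a b s := by rw [← mul_sum, hT1, mul_one]

theorem sum_prod_agreeOutside_eq_one {g : ι → Bool → (ι → Bool) → ℝ} (hg : DependsOnlyAbove g)
    (hsum : ∀ i r, g i false r + g i true r = 1) (T : Finset ι) (s : ι → Bool) :
    ∑ r ∈ agreeOutside T s, ∏ i ∈ T, g i (r i) r = 1 := by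
  induction T using Finset.induction_on_max generalizing s with
  | empty => simp [agreeOutside_empty]
  | insert a T hT ih =>
    have h := sum_mul_prod_insert_of_forall_lt hg hT ih (fun _ => 1) s
    simp only [one_mul, Fintype.sum_bool] at h
    rw [h, add_comm, hsum]

variable [LocallyFiniteOrder ι] {o k : ι}

theorem filter_eq_agreeOutside_Ioc (ho : IsBot o) (hk : o < k) (s : ι → Bool)
    [DecidablePred fun r : ι → Bool => r o = true ∧ ∀ i, k < i → r i = s i] :
    univ.filter (fun r : ι → Bool => r o = true ∧ ∀ i, k < i → r i = s i)
      = agreeOutside (Ioc o k) (Function.update s o true) := by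
  ext r
  simp only [mem_filter, mem_univ, true_and, mem_agreeOutside, mem_Ioc, not_and_or, not_lt,
    not_le, Function.update_apply]
  constructor
  · rintro ⟨hro, hr⟩ i hi
    split_ifs with h
    · exact h ▸ hro
    · exact hr i (hi.resolve_left fun hio => h (hio.antisymm (ho i)))
  · intro hr
    refine ⟨by simpa using hr o (Or.inl le_rfl), fun i hi => ?_⟩
    simpa [(hk.trans hi).ne'] using hr i (Or.inr hi)

theorem sum_mul_prod_Ioc {g : ι → Bool → (ι → Bool) → ℝ} (hg : DependsOnlyAbove g)
    (hsum : ∀ i r, g i false r + g i true r = 1) (ho : IsBot o) (hk : o < k) (s : ι → Bool)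
    [DecidablePred fun r : ι → Bool => r o = true ∧ ∀ i, k < i → r i = s i] (c : Bool → ℝ) :
    ∑ r ∈ univ.filter (fun r : ι → Bool => r o = true ∧ ∀ i, k < i → r i = s i),
        c (r k) * ∏ i ∈ Ioc o k, g i (r i) r
      = ∑ b, c b * g k b s := by
  rw [filter_eq_agreeOutside_Ioc ho hk, ← Ioo_insert_right hk,
    sum_mul_prod_insert_of_forall_lt hg (fun i hi => (mem_Ioo.1 hi).2)
      (sum_prod_agreeOutside_eq_one hg hsum _)]
  refine sum_congr rfl fun b _ => ?_
  rw [hg k b _ s fun j hj => by simp [(hk.trans hj).ne']]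

theorem prod_univ_eq_mul_prod_Ioc_mul_prod_Ioi {M : Type*} [CommMonoid M]
    [LocallyFiniteOrderTop ι] (ho : IsBot o) (hk : o ≤ k) (F : ι → M) :
    ∏ i, F i = F o * ((∏ i ∈ Ioc o k, F i) * ∏ i ∈ Ioi k, F i) := by
  have huniv : (univ : Finset ι) = insert o (Ioc o k ∪ Ioi k) := by
    ext i
    simp only [mem_univ, mem_insert, mem_union, mem_Ioc, mem_Ioi, true_iff]
    rcases (ho i).eq_or_lt with h | h
    · exact Or.inl h.symm
    · exact Or.inr ((le_or_gt i k).imp (⟨h, ·⟩) id)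
  rw [huniv, prod_insert (by simp [hk]), prod_union (disjoint_left.2 fun i hi hi' => by
    simp only [mem_Ioc, mem_Ioi] at hi hi'; exact not_lt.2 hi.2 hi')]

end Chain

theorem stmt_16_general
    (K : ℕ) (hK : 0 < K)
    (X : Fin K → Type) [∀ k, Fintype (X k)]
    (q : (∀ k, X k) → ℝ)
    (f : Fin K → Bool → (∀ k, X k) → (Fin K → Bool) → ℝ)
    (hfsum : ∀ k x r, f k false x r + f k true x r = 1)
    (hfdep : ∀ k b x (r r' : Fin K → Bool),
      (∀ i : Fin K, k < i → r i = r' i) → f k b x r = f k b x r')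
    (p : (∀ k, X k) → (Fin K → Bool) → ℝ)
    (hp : ∀ x r, p x r = q x * ∏ k, f k (r k) x r)
    (hf1 : ∀ x r, 0 < f ⟨0, hK⟩ true x r)
    (k : Fin K) (hk : (⟨0, hK⟩ : Fin K) < k)
    (x : ∀ k, X k) (s : Fin K → Bool)
    (hpos : 0 < ∑ r ∈ univ.filter
        (fun r : Fin K → Bool => r ⟨0, hK⟩ = true ∧ ∀ i : Fin K, k < i → r i = s i), p x r) :
    f k true x s
      = ((∑ r ∈ univ.filter
            (fun r : Fin K → Bool => r ⟨0, hK⟩ = true ∧ ∀ i : Fin K, k < i → r i = s i),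
            (if r k = true then (1 : ℝ) else 0) * (1 / f ⟨0, hK⟩ true x r) * p x r)
          / (∑ r ∈ univ.filter
            (fun r : Fin K → Bool => r ⟨0, hK⟩ = true ∧ ∀ i : Fin K, k < i → r i = s i), p x r))
        / ((∑ r ∈ univ.filter
            (fun r : Fin K → Bool => r ⟨0, hK⟩ = true ∧ ∀ i : Fin K, k < i → r i = s i),
            (1 / f ⟨0, hK⟩ true x r) * p x r)
          / (∑ r ∈ univ.filter
            (fun r : Fin K → Bool => r ⟨0, hK⟩ = true ∧ ∀ i : Fin K, k < i → r i = s i),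
            p x r)) := by
  set o : Fin K := ⟨0, hK⟩
  have ho : IsBot o := fun i => Nat.zero_le _
  have hg : DependsOnlyAbove fun i b r => f i b x r := fun i b r r' h => hfdep i b x r r' h
  set A := univ.filter fun r : Fin K → Bool => r o = true ∧ ∀ i : Fin K, k < i → r i = s i
  set C := q x * ∏ i ∈ Ioi k, f i (s i) x s
  have hp_factor : ∀ r ∈ A, p x r = f o true x r * (C * ∏ i ∈ Ioc o k, f i (r i) x r) := by
    intro r hr
    obtain ⟨hro, hrs⟩ := (mem_filter.1 hr).2
    rw [hp, prod_univ_eq_mul_prod_Ioc_mul_prod_Ioi ho hk.le, hro,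
      prod_congr_of_dependsOnlyAbove hg (Ioi k) (r' := s) fun i hi j hij =>
        hrs j ((mem_Ioi.1 hi).trans_le hij)]
    ring
  have hweighted : ∀ c : Bool → ℝ,
      ∑ r ∈ A, c (r k) * (1 / f o true x r) * p x r = C * ∑ b, c b * f k b x s := by
    intro c
    rw [← sum_mul_prod_Ioc hg (fun i => hfsum i x) ho hk s c, mul_sum]
    refine sum_congr rfl fun r hr => ?_
    rw [hp_factor r hr]
    field_simp [(hf1 x r).ne']
  have hD : ∑ r ∈ A, p x r = C * ∑ r ∈ A, f o true x r * ∏ i ∈ Ioc o k, f i (r i) x r := by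
    rw [mul_sum]
    exact sum_congr rfl fun r hr => by rw [hp_factor r hr]; ring
  have hC : C ≠ 0 := fun h => hpos.ne' (by rw [hD, h, zero_mul])
  have hN := hweighted fun b => if b then 1 else 0
  have hM := hweighted fun _ => 1
  simp only [Fintype.sum_bool, ↓reduceIte, Bool.false_eq_true, one_mul, zero_mul, add_zero]
    at hN hM
  rw [hN, hM, add_comm, hfsum, mul_one]
  field_simp

/-- Observed-data ratio representation of an identified propensity score:
with weight `W = 1 / f₁(1; X, (R₂,…,R_K))`, the propensity score of `R_k`
equals the ratio of the conditional expectations of `1_{R_k = 1} · W` and `W`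
given `X = x`, the later indicators, and `R₁ = 1`. -/
theorem stmt_16
    (K : ℕ) (hK : 0 < K)
    (X : Fin K → Type) [∀ k, Fintype (X k)] [∀ k, Nonempty (X k)]
    (q : (∀ k, X k) → ℝ)
    (hq0 : ∀ x, 0 ≤ q x) (hq1 : ∑ x, q x = 1)
    (f : Fin K → Bool → (∀ k, X k) → (Fin K → Bool) → ℝ)
    (hf0 : ∀ k b x r, 0 ≤ f k b x r)
    (hfsum : ∀ k x r, f k false x r + f k true x r = 1)
    (hfdep : ∀ k b x (r r' : Fin K → Bool),
      (∀ i : Fin K, k < i → r i = r' i) → f k b x r = f k b x r')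
    (p : (∀ k, X k) → (Fin K → Bool) → ℝ)
    (hp : ∀ x r, p x r = q x * ∏ k, f k (r k) x r)
    (hf1 : ∀ x r, 0 < f ⟨0, hK⟩ true x r)
    (k : Fin K) (hk : (⟨0, hK⟩ : Fin K) < k)
    (x : ∀ k, X k) (s : Fin K → Bool)
    (hpos : 0 < ∑ r ∈ univ.filter
        (fun r : Fin K → Bool => r ⟨0, hK⟩ = true ∧ ∀ i : Fin K, k < i → r i = s i), p x r) :
    f k true x s
      = ((∑ r ∈ univ.filter
            (fun r : Fin K → Bool => r ⟨0, hK⟩ = true ∧ ∀ i : Fin K, k < i → r i = s i),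
            (if r k = true then (1 : ℝ) else 0) * (1 / f ⟨0, hK⟩ true x r) * p x r)
          / (∑ r ∈ univ.filter
            (fun r : Fin K → Bool => r ⟨0, hK⟩ = true ∧ ∀ i : Fin K, k < i → r i = s i), p x r))
        / ((∑ r ∈ univ.filter
            (fun r : Fin K → Bool => r ⟨0, hK⟩ = true ∧ ∀ i : Fin K, k < i → r i = s i),
            (1 / f ⟨0, hK⟩ true x r) * p x r)
          / (∑ r ∈ univ.filter
            (fun r : Fin K → Bool => r ⟨0, hK⟩ = true ∧ ∀ i : Fin K, k < i → r i = s i),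
            p x r)) :=
  stmt_16_general K hK X q f hfsum hfdep p hp hf1 k hk x s hpos
end
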